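/- arXiv:1908.00287 — 6 statements merged into one kernel-verified Lean document; each statement's English description precedes it below -/
import Mathlib

section
/- If a finitely generated variety of Heyting algebras has the weak epimorphism-surjectivity property (every almost-onto epimorphism is surjective), then it has the full epimorphism-surjectivity property. -/
/- STATEMENT 4: If a finitely generated variety of Heyting algebras has the weak ES
property (every almost-onto epimorphism is surjective), then it has the ES property. -/

/-- A bundled Heyting algebra. -/
structure HAlg where
  carrier : Type
  [str : HeytingAlgebra carrier]

attribute [instance] HAlg.str

/-- Heyting terms over countably many variables. -/
inductive HTerm : Type
  | var : ℕ → HTerm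
  | bot : HTerm
  | top : HTerm
  | inf : HTerm → HTerm → HTerm
  | sup : HTerm → HTerm → HTerm
  | himp : HTerm → HTerm → HTerm

/-- Evaluation of a Heyting term in a Heyting algebra. -/
def HTerm.eval {α : Type} [HeytingAlgebra α] (v : ℕ → α) : HTerm → α
  | HTerm.var i => v i
  | HTerm.bot => ⊥
  | HTerm.top => ⊤
  | HTerm.inf t s => t.eval v ⊓ s.eval v
  | HTerm.sup t s => t.eval v ⊔ s.eval v
  | HTerm.himp t s => t.eval v ⇨ s.eval v

/-- The equation t ≈ s holds in α. -/
def Models (α : Type) [HeytingAlgebra α] (t s : HTerm) : Prop :=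
  ∀ v : ℕ → α, t.eval v = s.eval v

/-- A class of Heyting algebras. -/
def HAClass : Type 1 := HAlg → Prop

/-- A variety of Heyting algebras: an equationally axiomatized class. -/
def IsVariety (K : HAClass) : Prop :=
  ∃ E : Set (HTerm × HTerm), ∀ A : HAlg, K A ↔ ∀ p ∈ E, Models A.carrier p.1 p.2

/-- `f` is an epimorphism in the category of members of `K` with Heyting homomorphisms. -/
def IsEpiIn (K : HAClass) {α β : Type} [HeytingAlgebra α] [HeytingAlgebra β]
    (f : HeytingHom α β) : Prop :=
  ∀ C : HAlg, K C → ∀ g h : HeytingHom β C.carrier, g.comp f = h.comp f → g = h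

/-- `K` has the ES property: every epimorphism between members of `K` is surjective. -/
def HasES (K : HAClass) : Prop :=
  ∀ A B : HAlg, K A → K B → ∀ f : HeytingHom A.carrier B.carrier,
    IsEpiIn K f → Function.Surjective f

/-- A prime filter of a Heyting algebra: a nonempty proper upward-closed subset, closed
under meets, such that x ⊔ y ∈ F implies x ∈ F or y ∈ F. -/
def IsPrimeFilter {α : Type} [HeytingAlgebra α] (F : Set α) : Prop :=
  F.Nonempty ∧ F ≠ Set.univ ∧
  (∀ x ∈ F, ∀ y, x ≤ y → y ∈ F) ∧
  (∀ x ∈ F, ∀ y ∈ F, x ⊓ y ∈ F) ∧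
  (∀ x y : α, x ⊔ y ∈ F → x ∈ F ∨ y ∈ F)

/-- Width at most n: in the dual Esakia space (prime filters ordered by inclusion),
no upset ↑F contains an antichain of n+1 elements. -/
def WidthAtMost (n : ℕ) (A : HAlg) : Prop :=
  ∀ F : Set A.carrier, IsPrimeFilter F →
    ∀ G : Fin (n + 1) → Set A.carrier,
      (∀ i, IsPrimeFilter (G i) ∧ F ⊆ G i) →
      (∀ i j, i ≠ j → ¬ G i ⊆ G j) → False

/-- Membership in the subalgebra generated by S. -/
inductive InSubalg {α : Type} [HeytingAlgebra α] (S : Set α) : α → Prop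
  | mem : ∀ {a}, a ∈ S → InSubalg S a
  | bot : InSubalg S ⊥
  | top : InSubalg S ⊤
  | inf : ∀ {a b}, InSubalg S a → InSubalg S b → InSubalg S (a ⊓ b)
  | sup : ∀ {a b}, InSubalg S a → InSubalg S b → InSubalg S (a ⊔ b)
  | himp : ∀ {a b}, InSubalg S a → InSubalg S b → InSubalg S (a ⇨ b)

/-- f is almost onto: the image of f together with some finite set generates β. -/
def AlmostOnto {α β : Type} [HeytingAlgebra α] [HeytingAlgebra β]
    (f : HeytingHom α β) : Prop :=
  ∃ C : Set β, C.Finite ∧ ∀ x : β, InSubalg (Set.range f ∪ C) x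

/-- The weak ES property: every almost-onto epimorphism between members of K is
surjective. -/
def HasWeakES (K : HAClass) : Prop :=
  ∀ A B : HAlg, K A → K B → ∀ f : HeytingHom A.carrier B.carrier,
    IsEpiIn K f → AlmostOnto f → Function.Surjective f


namespace ES4


variable {α : Type} [HeytingAlgebra α]

/-- Biimplication. -/
def bii (x y : α) : α := (x ⇨ y) ⊓ (y ⇨ x)

lemma le_bii {x y f : α} (h1 : x ⊓ f ≤ y) (h2 : y ⊓ f ≤ x) : f ≤ bii x y :=
  le_inf (le_himp_iff.mpr (by rw [inf_comm]; exact h1))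
    (le_himp_iff.mpr (by rw [inf_comm]; exact h2))

lemma bii_eq_top_iff {x y : α} : bii x y = ⊤ ↔ x = y := by
  constructor
  · intro h
    have h1 : (⊤ : α) ≤ x ⇨ y := by rw [← h]; exact inf_le_left
    have h2 : (⊤ : α) ≤ y ⇨ x := by rw [← h]; exact inf_le_right
    have hx : x ≤ y := by
      have := le_himp_iff.mp h1
      rwa [top_inf_eq] at this
    have hy : y ≤ x := by
      have := le_himp_iff.mp h2
      rwa [top_inf_eq] at this
    exact le_antisymm hx hy
  · rintro rfl
    simp [bii, himp_self]

lemma inf_bii (x y : α) : x ⊓ bii x y = x ⊓ y := by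
  unfold bii
  rw [← inf_assoc, inf_himp, inf_assoc, inf_himp, inf_comm y x, ← inf_assoc, inf_idem]

lemma inf_bii' (x y : α) : y ⊓ bii x y = x ⊓ y := by
  have : bii x y = bii y x := by unfold bii; rw [inf_comm]
  rw [this, inf_bii, inf_comm]

lemma map_bii {β : Type} [HeytingAlgebra β] (k : HeytingHom α β) (x y : α) :
    k (bii x y) = bii (k x) (k y) := by
  simp [bii, map_inf, map_himp]

/-- A filter. -/
structure IsFilt (F : Set α) : Prop where
  top : ⊤ ∈ F
  up : ∀ ⦃x⦄, x ∈ F → ∀ ⦃y⦄, x ≤ y → y ∈ F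
  inf : ∀ ⦃x⦄, x ∈ F → ∀ ⦃y⦄, y ∈ F → x ⊓ y ∈ F

section Quot

variable (F : Set α) (hF : IsFilt F)

def fsetoid : Setoid α where
  r x y := ∃ f ∈ F, x ⊓ f = y ⊓ f
  iseqv := by
    refine ⟨fun x => ⟨⊤, hF.top, rfl⟩, ?_, ?_⟩
    · rintro x y ⟨f, hf, h⟩; exact ⟨f, hf, h.symm⟩
    · rintro x y z ⟨f, hf, h⟩ ⟨g, hg, h'⟩
      refine ⟨f ⊓ g, hF.inf hf hg, ?_⟩
      calc x ⊓ (f ⊓ g) = x ⊓ f ⊓ g := by rw [inf_assoc]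
        _ = y ⊓ f ⊓ g := by rw [h]
        _ = y ⊓ g ⊓ f := by rw [inf_assoc, inf_comm f g, ← inf_assoc]
        _ = z ⊓ g ⊓ f := by rw [h']
        _ = z ⊓ (f ⊓ g) := by rw [inf_assoc, inf_comm g f]

def FQuot : Type := Quotient (fsetoid F hF)

def qmk (x : α) : FQuot F hF := Quotient.mk (fsetoid F hF) x

lemma qmk_surjective : Function.Surjective (qmk F hF) := fun y =>
  Quotient.inductionOn y fun x => ⟨x, rfl⟩

variable {F hF}

lemma qrel_combine {x x' y y' f g : α} (hx : x ⊓ f = x' ⊓ f) (hy : y ⊓ g = y' ⊓ g) :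
    x ⊓ (f ⊓ g) = x' ⊓ (f ⊓ g) ∧ y ⊓ (f ⊓ g) = y' ⊓ (f ⊓ g) := by
  constructor
  · rw [← inf_assoc, hx, inf_assoc]
  · rw [inf_comm f g, ← inf_assoc, hy, inf_assoc]

lemma himp_inf_cancel (x y f : α) : (x ⇨ y) ⊓ f = ((x ⊓ f) ⇨ (y ⊓ f)) ⊓ f := by
  apply le_antisymm
  · refine le_inf (le_himp_iff.mpr ?_) inf_le_right
    have hxy : (x ⇨ y) ⊓ x ≤ y := le_himp_iff.mp (le_refl (x ⇨ y))
    have h1 : (x ⇨ y) ⊓ f ⊓ (x ⊓ f) ≤ (x ⇨ y) ⊓ x :=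
      le_inf (le_trans inf_le_left inf_le_left) (le_trans inf_le_right inf_le_left)
    have h2 : (x ⇨ y) ⊓ f ⊓ (x ⊓ f) ≤ f := le_trans inf_le_left inf_le_right
    exact le_inf (le_trans h1 hxy) h2
  · refine le_inf (le_himp_iff.mpr ?_) inf_le_right
    have hxy : ((x ⊓ f) ⇨ (y ⊓ f)) ⊓ (x ⊓ f) ≤ y ⊓ f :=
      le_himp_iff.mp (le_refl ((x ⊓ f) ⇨ (y ⊓ f)))
    have step : (((x ⊓ f) ⇨ (y ⊓ f)) ⊓ f) ⊓ x ≤ ((x ⊓ f) ⇨ (y ⊓ f)) ⊓ (x ⊓ f) :=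
      le_inf (le_trans inf_le_left inf_le_left)
        (le_inf inf_le_right (le_trans inf_le_left inf_le_right))
    exact le_trans step (le_trans hxy inf_le_left)

variable (F hF)

instance : Max (FQuot F hF) :=
  ⟨Quotient.map₂ (· ⊔ ·) (by
    rintro x x' ⟨f, hf, hx⟩ y y' ⟨g, hg, hy⟩
    obtain ⟨h1, h2⟩ := qrel_combine hx hy
    refine ⟨f ⊓ g, hF.inf hf hg, ?_⟩
    rw [inf_sup_right, h1, h2, ← inf_sup_right])⟩

instance : Min (FQuot F hF) :=
  ⟨Quotient.map₂ (· ⊓ ·) (by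
    rintro x x' ⟨f, hf, hx⟩ y y' ⟨g, hg, hy⟩
    obtain ⟨h1, h2⟩ := qrel_combine hx hy
    refine ⟨f ⊓ g, hF.inf hf hg, ?_⟩
    rw [inf_inf_distrib_right, h1, h2, ← inf_inf_distrib_right])⟩

def qhimp : FQuot F hF → FQuot F hF → FQuot F hF :=
  Quotient.map₂ (· ⇨ ·) (by
    rintro x x' ⟨f, hf, hx⟩ y y' ⟨g, hg, hy⟩
    obtain ⟨h1, h2⟩ := qrel_combine hx hy
    refine ⟨f ⊓ g, hF.inf hf hg, ?_⟩
    rw [himp_inf_cancel, h1, h2, ← himp_inf_cancel])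

variable {F hF}

lemma qmk_sup (x y : α) : qmk F hF x ⊔ qmk F hF y = qmk F hF (x ⊔ y) := rfl
lemma qmk_inf (x y : α) : qmk F hF x ⊓ qmk F hF y = qmk F hF (x ⊓ y) := rfl
lemma qmk_himp (x y : α) : qhimp F hF (qmk F hF x) (qmk F hF y) = qmk F hF (x ⇨ y) := rfl

instance : Lattice (FQuot F hF) := by
  refine Lattice.mk' ?_ ?_ ?_ ?_ ?_ ?_
  · intro a b
    refine Quotient.inductionOn₂ a b fun x y => ?_
    exact Quotient.sound ⟨⊤, hF.top, by simp [sup_comm, sup_comm, sup_assoc, inf_comm, inf_assoc, sup_inf_self, inf_sup_self, sup_left_comm, inf_left_comm]⟩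
  · intro a b c
    refine Quotient.inductionOn₃ a b c fun x y z => ?_
    exact Quotient.sound ⟨⊤, hF.top, by simp [sup_assoc, sup_comm, sup_assoc, inf_comm, inf_assoc, sup_inf_self, inf_sup_self, sup_left_comm, inf_left_comm]⟩
  · intro a b
    refine Quotient.inductionOn₂ a b fun x y => ?_
    exact Quotient.sound ⟨⊤, hF.top, by simp [inf_comm, sup_comm, sup_assoc, inf_comm, inf_assoc, sup_inf_self, inf_sup_self, sup_left_comm, inf_left_comm]⟩
  · intro a b c
    refine Quotient.inductionOn₃ a b c fun x y z => ?_
    exact Quotient.sound ⟨⊤, hF.top, by simp [inf_assoc, sup_comm, sup_assoc, inf_comm, inf_assoc, sup_inf_self, inf_sup_self, sup_left_comm, inf_left_comm]⟩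
  · intro a b
    refine Quotient.inductionOn₂ a b fun x y => ?_
    exact Quotient.sound ⟨⊤, hF.top, by simp [sup_inf_self, sup_comm, sup_assoc, inf_comm, inf_assoc, sup_inf_self, inf_sup_self, sup_left_comm, inf_left_comm]⟩
  · intro a b
    refine Quotient.inductionOn₂ a b fun x y => ?_
    exact Quotient.sound ⟨⊤, hF.top, by simp [inf_sup_self, sup_comm, sup_assoc, inf_comm, inf_assoc, sup_inf_self, inf_sup_self, sup_left_comm, inf_left_comm]⟩

lemma qle_iff {x y : α} : qmk F hF x ≤ qmk F hF y ↔ ∃ f ∈ F, x ⊓ f ≤ y := by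
  rw [← sup_eq_right]; change qmk F hF (x ⊔ y) = qmk F hF y ↔ _
  constructor
  · intro hq
    obtain ⟨f, hf, hxy⟩ := Quotient.exact hq
    refine ⟨f, hf, ?_⟩
    calc x ⊓ f ≤ (x ⊔ y) ⊓ f := inf_le_inf_right _ le_sup_left
      _ = y ⊓ f := hxy
      _ ≤ y := inf_le_left
  · rintro ⟨f, hf, hle⟩
    refine Quotient.sound ⟨f, hf, ?_⟩
    rw [inf_sup_right]
    exact sup_eq_right.mpr (le_inf hle inf_le_right)

instance : HeytingAlgebra (FQuot F hF) :=
  { (inferInstance : Lattice (FQuot F hF)) with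
    top := qmk F hF ⊤
    le_top := fun a => Quotient.inductionOn a fun x => qle_iff.mpr ⟨⊤, hF.top, le_top⟩
    bot := qmk F hF ⊥
    bot_le := fun a => Quotient.inductionOn a fun x =>
      qle_iff.mpr ⟨⊤, hF.top, le_trans inf_le_left bot_le⟩
    himp := qhimp F hF
    le_himp_iff := fun a b c => by
      refine Quotient.inductionOn₃ a b c fun x y z => ?_
      show qmk F hF x ≤ qhimp F hF (qmk F hF y) (qmk F hF z) ↔
        qmk F hF x ⊓ qmk F hF y ≤ qmk F hF z
      rw [qmk_himp, qmk_inf, qle_iff, qle_iff]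
      constructor
      · rintro ⟨f, hf, hle⟩
        refine ⟨f, hf, ?_⟩
        have : x ⊓ y ⊓ f = x ⊓ f ⊓ y := by rw [inf_right_comm]
        rw [this]
        calc x ⊓ f ⊓ y ≤ (y ⇨ z) ⊓ y := inf_le_inf_right _ hle
          _ ≤ z := le_himp_iff.mp (le_refl (y ⇨ z))
      · rintro ⟨f, hf, hle⟩
        refine ⟨f, hf, le_himp_iff.mpr ?_⟩
        rw [inf_right_comm]
        exact hle
    compl := fun a => qhimp F hF a (qmk F hF ⊥)
    himp_bot := fun _ => rfl }

lemma qmk_top : (⊤ : FQuot F hF) = qmk F hF ⊤ := rfl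
lemma qmk_bot : (⊥ : FQuot F hF) = qmk F hF ⊥ := rfl
lemma qmk_himp' (x y : α) : qmk F hF x ⇨ qmk F hF y = qmk F hF (x ⇨ y) := rfl

lemma qmk_eq_iff {x y : α} : qmk F hF x = qmk F hF y ↔ ∃ f ∈ F, x ⊓ f = y ⊓ f :=
  ⟨fun h => Quotient.exact h, fun h => Quotient.sound h⟩

lemma qmk_eq_iff_bii {x y : α} : qmk F hF x = qmk F hF y ↔ bii x y ∈ F := by
  rw [qmk_eq_iff]
  constructor
  · rintro ⟨f, hf, h⟩
    refine hF.up hf (le_bii ?_ ?_)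
    · rw [h]; exact inf_le_left
    · rw [← h]; exact inf_le_left
  · intro hb
    exact ⟨bii x y, hb, by rw [inf_bii, inf_bii']⟩

lemma qmk_eq_top_iff {x : α} : qmk F hF x = ⊤ ↔ x ∈ F := by
  rw [qmk_top, qmk_eq_iff_bii]
  have : bii x ⊤ ∈ F ↔ x ∈ F := by
    constructor
    · intro h
      refine hF.up h ?_
      calc bii x ⊤ ≤ ⊤ ⇨ x := inf_le_right
        _ = x := top_himp
    · intro h
      refine hF.up h (le_bii ?_ ?_) <;> simp
  exact this

def qmkHom (F : Set α) (hF : IsFilt F) : HeytingHom α (FQuot F hF) where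
  toFun := qmk F hF
  map_sup' := fun x y => (qmk_sup x y).symm
  map_inf' := fun x y => (qmk_inf x y).symm
  map_bot' := qmk_bot.symm
  map_himp' := fun x y => (qmk_himp' x y).symm

lemma qmkHom_surjective {F : Set α} {hF : IsFilt F} :
    Function.Surjective ⇑(qmkHom F hF) :=
  qmk_surjective F hF

end Quot


section Sub

variable {α : Type} [HeytingAlgebra α] {S : Set α}

def Sub (S : Set α) : Type := {x : α // InSubalg S x}

instance : Lattice (Sub S) :=
  Subtype.lattice (fun _ _ hx hy => hx.sup hy) (fun _ _ hx hy => hx.inf hy)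

lemma Sub.inf_val (x y : Sub S) : (x ⊓ y).1 = x.1 ⊓ y.1 := rfl
lemma Sub.sup_val (x y : Sub S) : (x ⊔ y).1 = x.1 ⊔ y.1 := rfl

instance : HeytingAlgebra (Sub S) :=
  { (inferInstance : Lattice (Sub S)) with
    top := ⟨⊤, InSubalg.top⟩
    le_top := fun a => show a.1 ≤ ⊤ from le_top
    bot := ⟨⊥, InSubalg.bot⟩
    bot_le := fun a => show (⊥ : α) ≤ a.1 from bot_le
    himp := fun x y => ⟨x.1 ⇨ y.1, x.2.himp y.2⟩
    le_himp_iff := fun a b c => by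
      show a.1 ≤ b.1 ⇨ c.1 ↔ (a ⊓ b).1 ≤ c.1
      rw [Sub.inf_val]
      exact le_himp_iff
    compl := fun a => ⟨a.1 ⇨ ⊥, a.2.himp InSubalg.bot⟩
    himp_bot := fun _ => rfl }

lemma Sub.top_val : (⊤ : Sub S).val = (⊤ : α) := rfl
lemma Sub.bot_val : (⊥ : Sub S).val = (⊥ : α) := rfl
lemma Sub.himp_val (x y : Sub S) : (x ⇨ y).1 = x.1 ⇨ y.1 := rfl

def Sub.incl : HeytingHom (Sub S) α where
  toFun := Subtype.val
  map_sup' := fun _ _ => rfl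
  map_inf' := fun _ _ => rfl
  map_bot' := rfl
  map_himp' := fun _ _ => rfl

lemma Sub.incl_injective : Function.Injective (Sub.incl (S := S)) :=
  fun _ _ h => Subtype.ext h

end Sub

section Transfer

variable {β γ : Type} [HeytingAlgebra β] [HeytingAlgebra γ]

lemma eval_hom (σ : HeytingHom β γ) (t : HTerm) (v : ℕ → β) :
    σ (t.eval v) = t.eval (fun i => σ (v i)) := by
  induction t with
  | var i => rfl
  | bot => exact map_bot σ
  | top => exact map_top σ
  | inf a b iha ihb => show σ (_ ⊓ _) = _ ⊓ _; rw [map_inf, iha, ihb]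
  | sup a b iha ihb => show σ (_ ⊔ _) = _ ⊔ _; rw [map_sup, iha, ihb]
  | himp a b iha ihb => show σ (_ ⇨ _) = _ ⇨ _; rw [map_himp, iha, ihb]

lemma models_of_surj (σ : HeytingHom β γ) (hs : Function.Surjective σ)
    (t s : HTerm) (h : Models β t s) : Models γ t s := by
  intro v
  choose u hu using fun i => hs (v i)
  have hv : v = fun i => σ (u i) := funext fun i => (hu i).symm
  rw [hv, ← eval_hom, ← eval_hom, h u]

lemma models_of_inj (σ : HeytingHom β γ) (hi : Function.Injective σ)
    (t s : HTerm) (h : Models γ t s) : Models β t s := by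
  intro v
  apply hi
  rw [eval_hom, eval_hom, h]

end Transfer

section Prime

variable {α : Type} [HeytingAlgebra α]

lemma exists_prime_avoiding (I : Set α)
    (hsupI : ∀ x ∈ I, ∀ y ∈ I, x ⊔ y ∈ I) (htop : (⊤ : α) ∉ I) :
    ∃ F : Set α, IsFilt F ∧ (∀ z ∈ F, z ∉ I) ∧
      ∀ u v : α, u ⊔ v ∈ F → u ∈ F ∨ v ∈ F := by
  classical
  set Fam : Set (Set α) := {F | IsFilt F ∧ ∀ z ∈ F, z ∉ I} with hFam
  have hchain : ∀ c ⊆ Fam, IsChain (· ⊆ ·) c → c.Nonempty →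
      ∃ ub ∈ Fam, ∀ s ∈ c, s ⊆ ub := by
    intro c hc hch ⟨F0, hF0⟩
    refine ⟨⋃₀ c, ⟨⟨?_, ?_, ?_⟩, ?_⟩, fun s hs => Set.subset_sUnion_of_mem hs⟩
    · exact ⟨F0, hF0, (hc hF0).1.top⟩
    · rintro x ⟨Fx, hFx, hxFx⟩ y hxy
      exact ⟨Fx, hFx, (hc hFx).1.up hxFx hxy⟩
    · rintro x ⟨Fx, hFx, hxFx⟩ y ⟨Fy, hFy, hyFy⟩
      rcases eq_or_ne Fx Fy with rfl | hne
      · exact ⟨Fx, hFx, (hc hFx).1.inf hxFx hyFy⟩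
      · rcases hch hFx hFy hne with hsub | hsub
        · exact ⟨Fy, hFy, (hc hFy).1.inf (hsub hxFx) hyFy⟩
        · exact ⟨Fx, hFx, (hc hFx).1.inf hxFx (hsub hyFy)⟩
    · rintro z ⟨Fz, hFz, hzFz⟩
      exact (hc hFz).2 z hzFz
  have hsing : ({(⊤ : α)} : Set α) ∈ Fam := by
    refine ⟨⟨rfl, ?_, ?_⟩, ?_⟩
    · rintro x rfl y hxy
      exact le_antisymm le_top hxy
    · rintro x rfl y rfl; simp
    · rintro z rfl; exact htop
  obtain ⟨m, _, hmmax⟩ := zorn_subset_nonempty Fam hchain _ hsing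
  obtain ⟨hmF, hmI⟩ := hmmax.prop
  refine ⟨m, hmF, hmI, ?_⟩
  intro u v huv
  by_contra hcon
  push_neg at hcon
  obtain ⟨hu, hv⟩ := hcon
  -- the filter generated by m and an element w
  have hgen : ∀ w : α, w ∉ m →
      ∃ z x, z ∈ m ∧ x ∈ I ∧ w ⊓ z ≤ x := by
    intro w hw
    set Fw : Set α := {z | ∃ y ∈ m, w ⊓ y ≤ z} with hFw
    have hFwfilt : IsFilt Fw := by
      refine ⟨⟨⊤, hmF.top, le_top⟩, ?_, ?_⟩
      · rintro x ⟨y, hy, hxy⟩ x' hxx'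
        exact ⟨y, hy, le_trans hxy hxx'⟩
      · rintro x ⟨y, hy, hxy⟩ x' ⟨y', hy', hxy'⟩
        refine ⟨y ⊓ y', hmF.inf hy hy', le_inf ?_ ?_⟩
        · exact le_trans (inf_le_inf_left w (inf_le_left)) hxy
        · exact le_trans (inf_le_inf_left w (inf_le_right)) hxy'
    have hmFw : m ⊆ Fw := fun z hz => ⟨z, hz, inf_le_right⟩
    have hwFw : w ∈ Fw := ⟨⊤, hmF.top, by rw [inf_top_eq]⟩
    by_cases hne : ∀ z ∈ Fw, z ∉ I
    · have : Fw ∈ Fam := ⟨hFwfilt, hne⟩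
      have := hmmax.2 this hmFw
      exact absurd (this hwFw) hw
    · push_neg at hne
      obtain ⟨z, hzFw, hzI⟩ := hne
      obtain ⟨y, hy, hwy⟩ := hzFw
      exact ⟨y, z, hy, hzI, hwy⟩
  obtain ⟨z1, x1, hz1, hx1, hux1⟩ := hgen u hu
  obtain ⟨z2, x2, hz2, hx2, hvx2⟩ := hgen v hv
  have hx12 : x1 ⊔ x2 ∈ I := hsupI _ hx1 _ hx2
  have hle : (u ⊔ v) ⊓ (z1 ⊓ z2) ≤ x1 ⊔ x2 := by
    rw [inf_sup_right]
    refine sup_le_sup ?_ ?_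
    · exact le_trans (inf_le_inf_left u inf_le_left) hux1
    · exact le_trans (inf_le_inf_left v inf_le_right) hvx2
  have hmem : x1 ⊔ x2 ∈ m := hmF.up (hmF.inf huv (hmF.inf hz1 hz2)) hle
  exact hmI _ hmem hx12

end Prime

section Finiteness

/-- Well-connectedness. -/
def WC (γ : Type) [HeytingAlgebra γ] : Prop :=
  ∀ x y : γ, x ⊔ y = ⊤ → x = ⊤ ∨ y = ⊤

lemma wc_of_prime {α : Type} [HeytingAlgebra α] {F : Set α} {hF : IsFilt F}
    (hp : ∀ u v : α, u ⊔ v ∈ F → u ∈ F ∨ v ∈ F) : WC (FQuot F hF) := by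
  intro a b
  refine Quotient.inductionOn₂ a b fun x y => ?_
  intro h
  have h' : qmk F hF (x ⊔ y) = ⊤ := h
  rcases hp x y (qmk_eq_top_iff.mp h') with hx | hy
  · exact Or.inl (qmk_eq_top_iff.mpr hx)
  · exact Or.inr (qmk_eq_top_iff.mpr hy)

lemma finite_of_wc {A E : Type} [HeytingAlgebra A] [HeytingAlgebra E] [Finite A]
    (htr : ∀ t s : HTerm, Models A t s → Models E t s)
    (hwc : WC E) : Finite E := by
  classical
  by_contra hinf
  haveI : Infinite E := not_finite_iff_infinite.mp hinf
  haveI : Fintype A := Fintype.ofFinite A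
  set n := Fintype.card A + 1 with hn
  have hApos : 0 < Fintype.card A := Fintype.card_pos_iff.mpr ⟨⊤⟩
  let x : Fin n ↪ E := (Fin.valEmbedding).trans (Infinite.natEmbedding E)
  let e : ℕ → E := fun k => if hk : k < n then x ⟨k, hk⟩ else x ⟨0, by omega⟩
  have he : ∀ i : Fin n, e i = x i := by
    intro i
    simp only [e, i.isLt, dif_pos]
  have pig : ∀ ρ : Fin n → A, ∃ p : Fin n × Fin n, p.1 ≠ p.2 ∧ ρ p.1 = ρ p.2 := by
    intro ρ
    obtain ⟨i, j, hij, hρ⟩ := Fintype.exists_ne_map_eq_of_card_lt ρ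
      (by simp [hn])
    exact ⟨(i, j), hij, hρ⟩
  choose p hp1 hp2 using pig
  let tb : (Fin n → A) → HTerm := fun ρ =>
    HTerm.inf (HTerm.himp (HTerm.var ((p ρ).1 : ℕ)) (HTerm.var ((p ρ).2 : ℕ)))
      (HTerm.himp (HTerm.var ((p ρ).2 : ℕ)) (HTerm.var ((p ρ).1 : ℕ)))
  have tb_eval : ∀ (ρ : Fin n → A) {γ : Type} [HeytingAlgebra γ] (v : ℕ → γ),
      (tb ρ).eval v = bii (v ((p ρ).1 : ℕ)) (v ((p ρ).2 : ℕ)) := by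
    intro ρ γ _ v; rfl
  let L := (Finset.univ : Finset (Fin n → A)).toList
  let Z : HTerm := L.foldr (fun ρ acc => HTerm.sup (tb ρ) acc) HTerm.bot
  have foldr_eval : ∀ {γ : Type} [HeytingAlgebra γ] (v : ℕ → γ) (l : List (Fin n → A)),
      (l.foldr (fun ρ acc => HTerm.sup (tb ρ) acc) HTerm.bot).eval v
        = l.foldr (fun ρ acc => (tb ρ).eval v ⊔ acc) ⊥ := by
    intro γ _ v l
    induction l with
    | nil => rfl
    | cons hd tl ih =>
      show HTerm.eval v (tb hd) ⊔ _ = _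
      simp only [List.foldr_cons]
      rw [ih]
  have hZtop : Models A Z HTerm.top := by
    intro v
    show _ = ⊤
    rw [foldr_eval]
    have hmem : (fun i : Fin n => v (i : ℕ)) ∈ L := Finset.mem_toList.mpr (Finset.mem_univ _)
    have key : ∀ l : List (Fin n → A), (fun i : Fin n => v (i : ℕ)) ∈ l →
        l.foldr (fun ρ acc => (tb ρ).eval v ⊔ acc) ⊥ = ⊤ := by
      intro l
      induction l with
      | nil => intro hl; cases hl
      | cons hd tl ih =>
        intro hl
        rcases List.mem_cons.mp hl with hl' | hl'
        · show (tb hd).eval v ⊔ _ = ⊤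
          rw [tb_eval]
          have hveq := hp2 (fun i : Fin n => v (i : ℕ))
          have hbt : bii (v (((p (fun i : Fin n => v (i : ℕ))).1 : Fin n) : ℕ))
              (v (((p (fun i : Fin n => v (i : ℕ))).2 : Fin n) : ℕ)) = ⊤ :=
            bii_eq_top_iff.mpr hveq
          rw [← hl', hbt]
          exact top_sup_eq _
        · show _ ⊔ _ = ⊤
          rw [ih hl']
          exact sup_top_eq _
    exact key L hmem
  have hZE : Z.eval e = ⊤ := htr Z HTerm.top hZtop e
  have hcompne : ∀ ρ ∈ L, (tb ρ).eval e ≠ ⊤ := by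
    intro ρ _ htopc
    rw [tb_eval] at htopc
    have hx : e (((p ρ).1 : Fin n) : ℕ) = e (((p ρ).2 : Fin n) : ℕ) :=
      bii_eq_top_iff.mp htopc
    rw [he, he] at hx
    exact hp1 ρ (x.injective hx)
  have hbotE : (⊥ : E) ≠ ⊤ := by
    intro hbt
    have hall : ∀ z : E, z = ⊤ := fun z =>
      le_antisymm le_top (by rw [← hbt]; exact bot_le)
    have h01 : x ⟨0, by omega⟩ = x ⟨1, by omega⟩ := by rw [hall (x _), hall (x _)]
    exact Nat.zero_ne_one (congrArg Fin.val (x.injective h01))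
  have hne : Z.eval e ≠ ⊤ := by
    rw [foldr_eval]
    have key : ∀ l : List (Fin n → A), (∀ ρ ∈ l, (tb ρ).eval e ≠ ⊤) →
        l.foldr (fun ρ acc => (tb ρ).eval e ⊔ acc) ⊥ ≠ ⊤ := by
      intro l
      induction l with
      | nil => intro _; exact hbotE
      | cons hd tl ih =>
        intro hl htp
        rcases hwc _ _ htp with h | h
        · exact hl hd List.mem_cons_self h
        · exact ih (fun ρ hρ => hl ρ (List.mem_cons_of_mem _ hρ)) h
    exact key L hcompne
  exact hne hZE

end Finiteness

lemma epi_comp_surj {K : HAClass} {α β γ : Type} [HeytingAlgebra α] [HeytingAlgebra β]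
    [HeytingAlgebra γ] {f : HeytingHom α β} (hf : IsEpiIn K f) (σ : HeytingHom β γ)
    (hσ : Function.Surjective σ) : IsEpiIn K (σ.comp f) := by
  intro Cb hKC g' h' hc
  have h2 : (g'.comp σ).comp f = (h'.comp σ).comp f := by
    apply HeytingHom.ext
    intro a
    exact DFunLike.congr_fun hc a
  have h3 := hf Cb hKC _ _ h2
  apply HeytingHom.ext
  intro y
  obtain ⟨z, rfl⟩ := hσ y
  exact DFunLike.congr_fun h3 z


end ES4

theorem weakES_implies_ES_of_finitely_generated (K : HAClass) (A : HAlg)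
    (hfin : Finite A.carrier)
    (hgen : ∀ B : HAlg, K B ↔ ∀ t s : HTerm, Models A.carrier t s → Models B.carrier t s)
    (hweak : HasWeakES K) : HasES K := by
  classical
  intro A' Bb hKA' hKB f hepi b
  haveI : Finite A.carrier := hfin
  set Sgen : Set Bb.carrier := Set.range ⇑f ∪ {b} with hSgen
  let D : Type := ES4.Sub Sgen
  let bD : D := ⟨b, InSubalg.mem (Set.mem_union_right _ rfl)⟩
  let f' : HeytingHom A'.carrier D :=
    { toFun := fun a => ⟨f a, InSubalg.mem (Set.mem_union_left _ ⟨a, rfl⟩)⟩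
      map_sup' := fun a b' => Subtype.ext (map_sup f a b')
      map_inf' := fun a b' => Subtype.ext (map_inf f a b')
      map_bot' := Subtype.ext (map_bot f)
      map_himp' := fun a b' => Subtype.ext (map_himp f a b') }
  have hKD : K (HAlg.mk D) := by
    rw [hgen]
    intro t s hts
    exact ES4.models_of_inj ES4.Sub.incl ES4.Sub.incl_injective t s ((hgen Bb).mp hKB t s hts)
  have hepi' : IsEpiIn K f' := by
    intro Cb hKC g h hgh
    apply HeytingHom.ext
    intro d
    by_contra hne
    obtain ⟨FC, hFC, hFCd, hFCp⟩ := ES4.exists_prime_avoiding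
      (α := Cb.carrier) {z | z ≤ ES4.bii (g d) (h d)}
      (fun x hx y hy => sup_le hx hy)
      (fun hc => hne (ES4.bii_eq_top_iff.mp (le_antisymm le_top hc)))
    let C1 : Type := ES4.FQuot FC hFC
    let π : HeytingHom Cb.carrier C1 := ES4.qmkHom FC hFC
    let g1 : HeytingHom D C1 := π.comp g
    let h1 : HeytingHom D C1 := π.comp h
    have hKC1 : K (HAlg.mk C1) := by
      rw [hgen]
      intro t s hts
      exact ES4.models_of_surj π ES4.qmkHom_surjective t s ((hgen Cb).mp hKC t s hts)
    have hwcC1 : ES4.WC C1 := ES4.wc_of_prime hFCp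
    have hne1 : g1 d ≠ h1 d := by
      intro he
      have he' : ES4.qmk FC hFC (g d) = ES4.qmk FC hFC (h d) := he
      exact hFCd _ (ES4.qmk_eq_iff_bii.mp he') le_rfl
    have hgs : ∀ a, g1 (f' a) = h1 (f' a) := by
      intro a
      exact congrArg π (DFunLike.congr_fun hgh a)
    have mkPrime : ∀ k : HeytingHom D C1, ∃ F : Set Bb.carrier, ∃ hF : ES4.IsFilt F,
        (∀ x : D, x.1 ∈ F → k x = ⊤) ∧
        (∀ u v : Bb.carrier, u ⊔ v ∈ F → u ∈ F ∨ v ∈ F) := by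
      intro k
      have hsupcl : ∀ u ∈ {y : Bb.carrier | ∃ z : D, k z ≠ ⊤ ∧ y ≤ z.1},
          ∀ v ∈ {y : Bb.carrier | ∃ z : D, k z ≠ ⊤ ∧ y ≤ z.1},
          u ⊔ v ∈ {y : Bb.carrier | ∃ z : D, k z ≠ ⊤ ∧ y ≤ z.1} := by
        rintro u ⟨zu, hzu, huz⟩ v ⟨zv, hzv, hvz⟩
        refine ⟨zu ⊔ zv, ?_, sup_le_sup huz hvz⟩
        intro ht
        rw [show k (zu ⊔ zv) = k zu ⊔ k zv from k.map_sup' zu zv] at ht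
        rcases hwcC1 _ _ ht with h' | h'
        · exact hzu h'
        · exact hzv h'
      have htopn : (⊤ : Bb.carrier) ∉ {y : Bb.carrier | ∃ z : D, k z ≠ ⊤ ∧ y ≤ z.1} := by
        rintro ⟨z, hz, htz⟩
        apply hz
        have hz' : z = ⊤ := Subtype.ext (le_antisymm le_top htz)
        rw [hz', map_top]
      obtain ⟨F, hF, hFd, hFp⟩ := ES4.exists_prime_avoiding
        (α := Bb.carrier) {y | ∃ z : D, k z ≠ ⊤ ∧ y ≤ z.1} hsupcl htopn
      refine ⟨F, hF, ?_, hFp⟩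
      intro x hx
      by_contra hne'
      exact hFd _ hx ⟨x, hne', le_rfl⟩
    obtain ⟨F1, hF1, htr1, hp1⟩ := mkPrime g1
    obtain ⟨F2, hF2, htr2, hp2⟩ := mkPrime h1
    set F : Set Bb.carrier := F1 ∩ F2 with hFdef
    have hF : ES4.IsFilt F := ⟨⟨hF1.top, hF2.top⟩,
      fun x hx y hxy => ⟨hF1.up hx.1 hxy, hF2.up hx.2 hxy⟩,
      fun x hx y hy => ⟨hF1.inf hx.1 hy.1, hF2.inf hx.2 hy.2⟩⟩
    let Q : Type := ES4.FQuot F hF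
    let qh : HeytingHom Bb.carrier Q := ES4.qmkHom F hF
    have hKB' := (hgen Bb).mp hKB
    have hKQ : K (HAlg.mk Q) := by
      rw [hgen]
      intro t s hts
      exact ES4.models_of_surj qh ES4.qmkHom_surjective t s (hKB' t s hts)
    have hfin1 : Finite (ES4.FQuot F1 hF1) :=
      ES4.finite_of_wc (A := A.carrier)
        (fun t s hts => ES4.models_of_surj (ES4.qmkHom F1 hF1) ES4.qmkHom_surjective t s
          (hKB' t s hts))
        (ES4.wc_of_prime hp1)
    have hfin2 : Finite (ES4.FQuot F2 hF2) :=
      ES4.finite_of_wc (A := A.carrier)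
        (fun t s hts => ES4.models_of_surj (ES4.qmkHom F2 hF2) ES4.qmkHom_surjective t s
          (hKB' t s hts))
        (ES4.wc_of_prime hp2)
    have hfinQ : Finite Q := by
      let j : Q → ES4.FQuot F1 hF1 × ES4.FQuot F2 hF2 :=
        Quotient.lift (fun x => (ES4.qmk F1 hF1 x, ES4.qmk F2 hF2 x)) (by
          rintro x y ⟨fw, hfw, hxy⟩
          exact Prod.ext (Quotient.sound ⟨fw, hfw.1, hxy⟩) (Quotient.sound ⟨fw, hfw.2, hxy⟩))
      have hjinj : Function.Injective j := by
        intro y z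
        refine Quotient.inductionOn₂ y z ?_
        intro x1 x2 hq
        have h1' : ES4.qmk F1 hF1 x1 = ES4.qmk F1 hF1 x2 := congrArg Prod.fst hq
        have h2' : ES4.qmk F2 hF2 x1 = ES4.qmk F2 hF2 x2 := congrArg Prod.snd hq
        exact ES4.qmk_eq_iff_bii.mpr
          ⟨ES4.qmk_eq_iff_bii.mp h1', ES4.qmk_eq_iff_bii.mp h2'⟩
      exact Finite.of_injective j hjinj
    have hepiQ : IsEpiIn K (qh.comp f) := ES4.epi_comp_surj hepi qh ES4.qmkHom_surjective
    have haoQ : AlmostOnto (qh.comp f) := by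
      haveI := hfinQ
      refine ⟨Set.univ, Set.finite_univ, ?_⟩
      intro x
      exact InSubalg.mem (Set.mem_union_right _ (Set.mem_univ x))
    have hsur : Function.Surjective ⇑(qh.comp f) :=
      hweak A' (HAlg.mk Q) hKA' hKQ (qh.comp f) hepiQ haoQ
    choose sec hsec using hsur
    have htrF : ∀ x : D, x.1 ∈ F → g1 x = ⊤ ∧ h1 x = ⊤ :=
      fun x hx => ⟨htr1 x hx.1, htr2 x hx.2⟩
    have hrep : ∀ (y : Q) (x : D), qh x.1 = y →
        g1 (f' (sec y)) = g1 x ∧ h1 (f' (sec y)) = h1 x := by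
      intro y x hxy
      have h0 : qh (f (sec y)) = qh x.1 := by rw [hxy]; exact hsec y
      have hbF : ES4.bii (f (sec y)) x.1 ∈ F := ES4.qmk_eq_iff_bii.mp h0
      have hbD : (ES4.bii (f' (sec y)) x).1 ∈ F := hbF
      obtain ⟨hg', hh'⟩ := htrF _ hbD
      constructor
      · exact ES4.bii_eq_top_iff.mp (by rw [← ES4.map_bii g1]; exact hg')
      · exact ES4.bii_eq_top_iff.mp (by rw [← ES4.map_bii h1]; exact hh')
    have hrange : ∀ y : Q, ∃ x : D, qh x.1 = y := fun y => ⟨f' (sec y), hsec y⟩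
    let psg : Q → C1 := fun y => g1 (f' (sec y))
    let psh : Q → C1 := fun y => h1 (f' (sec y))
    have psg_d : ∀ x : D, psg (qh x.1) = g1 x := fun x => (hrep _ x rfl).1
    have psh_d : ∀ x : D, psh (qh x.1) = h1 x := fun x => (hrep _ x rfl).2
    have hom_of : ∀ (k : HeytingHom D C1) (ps : Q → C1),
        (∀ x : D, ps (qh x.1) = k x) → ∃ P : HeytingHom Q C1, ∀ y, P y = ps y := by
      intro k ps hps
      refine ⟨{ toFun := ps, map_sup' := ?_, map_inf' := ?_, map_bot' := ?_,
                map_himp' := ?_ }, fun y => rfl⟩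
      · intro u v
        obtain ⟨xu, rfl⟩ := hrange u
        obtain ⟨xv, rfl⟩ := hrange v
        have h1' : ps (qh xu.1 ⊔ qh xv.1) = k (xu ⊔ xv) := by
          rw [show qh xu.1 ⊔ qh xv.1 = qh (xu.1 ⊔ xv.1) from (qh.map_sup' _ _).symm]; exact hps (xu ⊔ xv)
        exact h1'.trans ((k.map_sup' xu xv).trans
          (congrArg₂ (· ⊔ ·) (hps xu).symm (hps xv).symm))
      · intro u v
        obtain ⟨xu, rfl⟩ := hrange u
        obtain ⟨xv, rfl⟩ := hrange v
        have h1' : ps (qh xu.1 ⊓ qh xv.1) = k (xu ⊓ xv) := by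
          rw [show qh xu.1 ⊓ qh xv.1 = qh (xu.1 ⊓ xv.1) from (qh.map_inf' _ _).symm]; exact hps (xu ⊓ xv)
        exact h1'.trans ((k.map_inf' xu xv).trans
          (congrArg₂ (· ⊓ ·) (hps xu).symm (hps xv).symm))
      · have hb : ps (⊥ : Q) = k (⊥ : D) := hps (⊥ : D)
        exact hb.trans (map_bot k)
      · intro u v
        obtain ⟨xu, rfl⟩ := hrange u
        obtain ⟨xv, rfl⟩ := hrange v
        have h1' : ps (qh xu.1 ⇨ qh xv.1) = k (xu ⇨ xv) := by
          rw [← map_himp qh]; exact hps (xu ⇨ xv)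
        exact h1'.trans ((map_himp k xu xv).trans
          (congrArg₂ (· ⇨ ·) (hps xu).symm (hps xv).symm))
    obtain ⟨G1q, hG1q⟩ := hom_of g1 psg psg_d
    obtain ⟨G2q, hG2q⟩ := hom_of h1 psh psh_d
    have hG12 : (G1q.comp qh).comp f = (G2q.comp qh).comp f := by
      apply HeytingHom.ext
      intro a
      show G1q (qh (f a)) = G2q (qh (f a))
      rw [hG1q, hG2q]
      have e1 : psg (qh ((f' a).1)) = g1 (f' a) := psg_d (f' a)
      have e2 : psh (qh ((f' a).1)) = h1 (f' a) := psh_d (f' a)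
      exact e1.trans ((hgs a).trans e2.symm)
    have hGG := hepi (HAlg.mk C1) hKC1 (G1q.comp qh) (G2q.comp qh) hG12
    have hfinal : g1 d = h1 d := by
      have h' : G1q (qh d.1) = G2q (qh d.1) := DFunLike.congr_fun hGG d.1
      rw [hG1q, hG2q, psg_d, psh_d] at h'
      exact h'
    exact hne1 hfinal
  have hao : AlmostOnto f' := by
    refine ⟨{bD}, Set.finite_singleton _, ?_⟩
    intro x
    obtain ⟨xv, hx⟩ := x
    induction hx with
    | @mem y hy =>
      rcases hy with ⟨a, ha⟩ | hy
      · exact InSubalg.mem (Set.mem_union_left _ ⟨a, Subtype.ext ha⟩)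
      · have hyb : y = b := hy
        subst hyb
        exact InSubalg.mem (Set.mem_union_right _ rfl)
    | bot => exact InSubalg.bot
    | top => exact InSubalg.top
    | inf ha hb iha ihb => exact InSubalg.inf iha ihb
    | sup ha hb iha ihb => exact InSubalg.sup iha ihb
    | himp ha hb iha ihb => exact InSubalg.himp iha ihb
  obtain ⟨a, ha⟩ := hweak A' (HAlg.mk D) hKA' hKD f' hepi' hao bD
  exact ⟨a, congrArg Subtype.val ha⟩
end

section
/- Every chain in an Esakia space has an infimum and a supremum with respect to the partial order, and these infima and suprema of chains are preserved by Esakia morphisms. -/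
/- STATEMENT 5: Every (nonempty) chain in an Esakia space has an infimum and a supremum,
and infima and suprema of chains are preserved by Esakia morphisms. -/

/-- An Esakia space: a Stone space equipped with a partial order such that principal
upsets are closed and the down-closure of a clopen set is clopen. -/
structure EsaSpace where
  carrier : Type
  [topSp : TopologicalSpace carrier]
  [ord : PartialOrder carrier]
  compact : CompactSpace carrier
  t2 : T2Space carrier
  zeroDim : ∀ U : Set carrier, IsOpen U →
    ∃ S : Set (Set carrier), (∀ V ∈ S, IsClopen V) ∧ U = ⋃₀ S
  ici_closed : ∀ x : carrier, IsClosed (Set.Ici x)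
  down_clopen : ∀ U : Set carrier, IsClopen U →
    IsClopen (↑(lowerClosure U) : Set carrier)

attribute [instance] EsaSpace.topSp EsaSpace.ord

/-- An Esakia morphism: continuous, order preserving, satisfying the back condition. -/
structure EsaHom (X Y : EsaSpace) where
  toFun : X.carrier → Y.carrier
  continuous : Continuous toFun
  monotone : Monotone toFun
  up : ∀ (x : X.carrier) (y : Y.carrier), toFun x ≤ y → ∃ z, x ≤ z ∧ toFun z = y

/-!
The sets `closure C ∩ ↑c`, `c ∈ C`, form a downward directed family of nonempty closed sets, so
by compactness they have a common point; it lies in `closure C` and above `C`, and since principal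
downsets are closed it is below every upper bound of `C`. Being in the closure of `C` is preserved
by continuous maps, so the same argument in the codomain shows that `f (sup C)` is the supremum
of `f '' C`. Infima are dual.
-/

open Set

section ClosedOrderTopology

variable {α β : Type*} [TopologicalSpace α] [Preorder α] [TopologicalSpace β] [Preorder β]

theorem isLUB_of_mem_upperBounds_of_mem_closure [ClosedIicTopology α] {s : Set α} {a : α}
    (ha : a ∈ upperBounds s) (hcl : a ∈ closure s) : IsLUB s a :=
  ⟨ha, fun _ hb => closure_minimal hb isClosed_Iic hcl⟩

theorem DirectedOn.exists_isLUB_mem_closure [CompactSpace α] [ClosedIciTopology α]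
    [ClosedIicTopology α] {s : Set α} (hd : DirectedOn (· ≤ ·) s) (hne : s.Nonempty) :
    ∃ a ∈ closure s, IsLUB s a := by
  have : Nonempty s := hne.to_subtype
  let t : s → Set α := fun c => closure s ∩ Ici (c : α)
  have htd : Directed (· ⊇ ·) t := by
    rintro ⟨c, hc⟩ ⟨d, hd'⟩
    obtain ⟨e, he, hce, hde⟩ := hd c hc d hd'
    exact ⟨⟨e, he⟩, inter_subset_inter_right _ (Ici_subset_Ici.2 hce),
      inter_subset_inter_right _ (Ici_subset_Ici.2 hde)⟩
  have htcl (c : s) : IsClosed (t c) := isClosed_closure.inter isClosed_Ici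
  obtain ⟨a, ha⟩ := IsCompact.nonempty_iInter_of_directed_nonempty_isCompact_isClosed t htd
    (fun c => ⟨c, subset_closure c.2, le_rfl⟩) (fun c => (htcl c).isCompact) htcl
  rw [mem_iInter] at ha
  have ha_cl : a ∈ closure s := (ha (Classical.arbitrary s)).1
  exact ⟨a, ha_cl, isLUB_of_mem_upperBounds_of_mem_closure (fun c hc => (ha ⟨c, hc⟩).2) ha_cl⟩

theorem DirectedOn.exists_isGLB_mem_closure [CompactSpace α] [ClosedIciTopology α]
    [ClosedIicTopology α] {s : Set α} (hd : DirectedOn (· ≥ ·) s) (hne : s.Nonempty) :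
    ∃ a ∈ closure s, IsGLB s a := by
  have : CompactSpace αᵒᵈ := ‹CompactSpace α›
  exact DirectedOn.exists_isLUB_mem_closure (α := αᵒᵈ) hd hne

theorem IsLUB.image_of_mem_closure [ClosedIicTopology β] {f : α → β} (hf : Continuous f)
    (hmono : Monotone f) {s : Set α} {a : α} (ha : IsLUB s a) (hcl : a ∈ closure s) :
    IsLUB (f '' s) (f a) :=
  isLUB_of_mem_upperBounds_of_mem_closure (hmono.mem_upperBounds_image ha.1)
    (map_mem_closure hf hcl (mapsTo_image f s))

theorem IsGLB.image_of_mem_closure [ClosedIciTopology β] {f : α → β} (hf : Continuous f)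
    (hmono : Monotone f) {s : Set α} {a : α} (ha : IsGLB s a) (hcl : a ∈ closure s) :
    IsGLB (f '' s) (f a) :=
  IsLUB.image_of_mem_closure (α := αᵒᵈ) (β := βᵒᵈ) hf hmono.dual ha hcl

end ClosedOrderTopology

namespace EsaSpace

variable (X : EsaSpace)

-- A clopen `V ∋ x` missing `Ici y` yields the open neighbourhood `(lowerClosure V)ᶜ` of `y`,
-- which is disjoint from `Iic x`.
theorem isClosed_Iic (x : X.carrier) : IsClosed (Iic x) := by
  refine isOpen_compl_iff.1 (isOpen_iff_forall_mem_open.2 fun y (hyx : ¬ y ≤ x) => ?_)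
  obtain ⟨S, hS, hU⟩ := X.zeroDim _ (X.ici_closed y).isOpen_compl
  have hx : x ∈ ⋃₀ S := hU ▸ hyx
  obtain ⟨V, hVS, hxV⟩ := hx
  have hV_disj : V ⊆ (Ici y)ᶜ := hU ▸ subset_sUnion_of_mem hVS
  refine ⟨(lowerClosure V : Set X.carrier)ᶜ, fun z hz hzx => hz ⟨x, hxV, hzx⟩,
    (X.down_clopen V (hS V hVS)).compl.isOpen, ?_⟩
  rintro ⟨v, hvV, hyv⟩
  exact hV_disj hvV hyv

instance : CompactSpace X.carrier := X.compact

instance : ClosedIciTopology X.carrier := ⟨X.ici_closed⟩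

instance : ClosedIicTopology X.carrier := ⟨X.isClosed_Iic⟩

end EsaSpace

theorem chains_have_inf_sup_preserved (X : EsaSpace) (C : Set X.carrier)
    (hne : C.Nonempty) (hchain : IsChain (· ≤ ·) C) :
    ((∃ a, IsGLB C a) ∧ (∃ b, IsLUB C b)) ∧
    (∀ (Y : EsaSpace) (f : EsaHom X Y),
      (∀ a, IsGLB C a → IsGLB (f.toFun '' C) (f.toFun a)) ∧
      (∀ b, IsLUB C b → IsLUB (f.toFun '' C) (f.toFun b))) := by
  have hchain_ge : IsChain (· ≥ ·) C := hchain.symm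
  obtain ⟨a, ha_cl, ha⟩ := hchain_ge.directedOn.exists_isGLB_mem_closure hne
  obtain ⟨b, hb_cl, hb⟩ := hchain.directedOn.exists_isLUB_mem_closure hne
  refine ⟨⟨⟨a, ha⟩, ⟨b, hb⟩⟩, fun Y f => ⟨fun a' ha' => ?_, fun b' hb' => ?_⟩⟩
  · rw [ha'.unique ha]
    exact ha.image_of_mem_closure f.continuous f.monotone ha_cl
  · rw [hb'.unique hb]
    exact hb.image_of_mem_closure f.continuous f.monotone hb_cl
end

section
/- In an Esakia space, for every pair of points x, y with x ≰ y, there exists a clopen upset U with x ∈ U and y ∉ U (the Priestley separation axiom holds). -/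
open TopologicalSpace

theorem isTopologicalBasis_isClopen_of_forall_eq_sUnion {α : Type*} [TopologicalSpace α]
    (h : ∀ U : Set α, IsOpen U → ∃ S : Set (Set α), (∀ V ∈ S, IsClopen V) ∧ U = ⋃₀ S) :
    IsTopologicalBasis {V : Set α | IsClopen V} := by
  refine isTopologicalBasis_of_isOpen_of_nhds (fun _ hV => hV.isOpen) fun a U haU hU => ?_
  obtain ⟨S, hS, rfl⟩ := h U hU
  obtain ⟨V, hVS, haV⟩ := haU
  exact ⟨V, hS V hVS, haV, Set.subset_sUnion_of_mem hVS⟩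

theorem notMem_lowerClosure_of_subset_compl_Ici {α : Type*} [Preorder α] {V : Set α} {x : α}
    (hV : V ⊆ (Set.Ici x)ᶜ) : x ∉ lowerClosure V := by
  rintro ⟨z, hzV, hxz⟩
  exact hV hzV hxz

theorem exists_isClopen_isUpperSet_of_isClopen_lowerClosure {α : Type*} [TopologicalSpace α]
    [Preorder α] {V : Set α} (hV : IsClopen (↑(lowerClosure V) : Set α)) {x y : α} (hy : y ∈ V)
    (hVx : V ⊆ (Set.Ici x)ᶜ) : ∃ U : Set α, IsClopen U ∧ IsUpperSet U ∧ x ∈ U ∧ y ∉ U :=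
  ⟨(lowerClosure V : Set α)ᶜ, hV.compl, (lowerClosure V).lower.compl,
    notMem_lowerClosure_of_subset_compl_Ici hVx, fun h => h (subset_lowerClosure hy)⟩

theorem priestley_separation (X : EsaSpace) (x y : X.carrier) (hxy : ¬ x ≤ y) :
    ∃ U : Set X.carrier, IsClopen U ∧ IsUpperSet U ∧ x ∈ U ∧ y ∉ U := by
  obtain ⟨V, hV, hyV, hVx⟩ := (isTopologicalBasis_isClopen_of_forall_eq_sUnion X.zeroDim)
    |>.exists_subset_of_mem_open (a := y) hxy (X.ici_closed x).isOpen_compl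
  exact exists_isClopen_isUpperSet_of_isClopen_lowerClosure (X.down_clopen V hV) hyV hVx
end

section
/- For every natural number n ≥ 1, a Heyting algebra A has width at most n (i.e., in the dual Esakia space of A, no upset ↑x contains an antichain of n+1 elements) if and only if A satisfies the equation w_n ≈ 1, where w_n is the join over i = 0,…,n of (x_i → join over j ≠ i of x_j). Consequently, the class W_n of Heyting algebras of width at most n is a variety. -/
/-- Finite disjunction of a list of terms (empty disjunction is ⊥). -/
def bigSup (l : List HTerm) : HTerm := l.foldr HTerm.sup HTerm.bot

/-- The term w_n = ⋁_{i=0}^{n} (x_i → ⋁_{j ≠ i} x_j). -/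
def wTerm (n : ℕ) : HTerm :=
  bigSup ((List.range (n + 1)).map (fun i =>
    HTerm.himp (HTerm.var i)
      (bigSup (((List.range (n + 1)).filter (fun j => j ≠ i)).map HTerm.var))))

open Order in
lemma exists_primeFilter {α : Type} [HeytingAlgebra α] (F : Set α)
    (hne : F.Nonempty) (hup : ∀ x ∈ F, ∀ y, x ≤ y → y ∈ F)
    (hinf : ∀ x ∈ F, ∀ y ∈ F, x ⊓ y ∈ F) (b : α) (hb : b ∉ F) :
    ∃ G : Set α, IsPrimeFilter G ∧ F ⊆ G ∧ b ∉ G := by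
  have hPF : IsPFilter F := IsPFilter.of_def hne
    (fun x hx y hy => ⟨x ⊓ y, hinf x hx y hy, inf_le_left, inf_le_right⟩)
    (fun {x y} hxy hx => hup x hx y hxy)
  have hdisj : Disjoint (hPF.toPFilter : Set α) ((Ideal.principal b : Ideal α) : Set α) := by
    rw [Set.disjoint_left]
    intro x hx hxb
    exact hb (hup x hx b (Ideal.mem_principal.mp hxb))
  obtain ⟨J, hJprime, hIJ, hJdisj⟩ := DistribLattice.prime_ideal_of_disjoint_filter_ideal hdisj
  refine ⟨(↑J : Set α)ᶜ, ⟨?_, ?_, ?_, ?_, ?_⟩, ?_, ?_⟩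
  · exact ⟨⊤, Set.disjoint_left.mp hJdisj (hup _ hne.choose_spec ⊤ le_top)⟩
  · intro h
    have : (⊥ : α) ∈ ((↑J : Set α)ᶜ) := h ▸ Set.mem_univ _
    exact this J.bot_mem
  · intro x hx y hxy hy
    exact hx (J.lower hxy hy)
  · intro x hx y hy hxy
    rcases hJprime.mem_or_mem hxy with h | h
    · exact hx h
    · exact hy h
  · intro x y hxy
    by_contra h
    push_neg at h
    obtain ⟨hx, hy⟩ := h
    simp only [Set.mem_compl_iff, not_not] at hx hy
    exact hxy (J.sup_mem hx hy)
  · intro x hx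
    exact Set.disjoint_left.mp hJdisj hx
  · intro hbc
    exact hbc (hIJ (Ideal.mem_principal_self))

lemma top_mem_of_primeFilter {α : Type} [HeytingAlgebra α] {F : Set α}
    (hF : IsPrimeFilter F) : (⊤ : α) ∈ F :=
  hF.2.2.1 _ hF.1.choose_spec ⊤ le_top

lemma le_bigSup_eval {α : Type} [HeytingAlgebra α] (v : ℕ → α) {t : HTerm} {l : List HTerm}
    (ht : t ∈ l) : t.eval v ≤ (bigSup l).eval v := by
  induction l with
  | nil => cases ht
  | cons hd tl ih =>
    rcases List.mem_cons.mp ht with h | h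
    · subst h; exact le_sup_left
    · exact le_trans (ih h) le_sup_right

lemma bigSup_eval_mem {α : Type} [HeytingAlgebra α] {F : Set α} (hF : IsPrimeFilter F)
    (v : ℕ → α) {l : List HTerm} (h : (bigSup l).eval v ∈ F) :
    ∃ t ∈ l, t.eval v ∈ F := by
  induction l with
  | nil =>
    exfalso
    apply hF.2.1
    ext x
    simp only [Set.mem_univ, iff_true]
    exact hF.2.2.1 _ h x bot_le
  | cons hd tl ih =>
    rcases hF.2.2.2.2 _ _ h with h' | h'
    · exact ⟨hd, List.mem_cons_self, h'⟩
    · obtain ⟨t, ht, ht'⟩ := ih h'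
      exact ⟨t, List.mem_cons_of_mem _ ht, ht'⟩

lemma finset_inf_mem {α : Type} [HeytingAlgebra α] {F : Set α} (hF : IsPrimeFilter F)
    {ι : Type} [DecidableEq ι] (s : Finset ι) (f : ι → α) (hf : ∀ i ∈ s, f i ∈ F) :
    s.inf f ∈ F := by
  induction s using Finset.induction with
  | empty => simpa using top_mem_of_primeFilter hF
  | insert _ _ hnotmem ih =>
    rw [Finset.inf_insert]
    exact hF.2.2.2.1 _ (hf _ (Finset.mem_insert_self _ _)) _
      (ih fun i hi => hf i (Finset.mem_insert_of_mem hi))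

theorem width_iff_wTerm (n : ℕ) (hn : 1 ≤ n) :
    (∀ A : HAlg, WidthAtMost n A ↔ Models A.carrier (wTerm n) HTerm.top) ∧
    IsVariety (fun A => WidthAtMost n A) := by
  have main : ∀ A : HAlg, WidthAtMost n A ↔ Models A.carrier (wTerm n) HTerm.top := by
    intro A
    set α := A.carrier
    constructor
    · -- width ⟹ equation (contrapositive)
      intro hwidth v
      by_contra hne
      have hne' : (wTerm n).eval v ≠ ⊤ := by simpa [HTerm.eval] using hne
      -- find a prime filter F not containing w := (wTerm n).eval v
      obtain ⟨F, hF, _, hwF⟩ := exists_primeFilter (Set.Ici (⊤ : α)) ⟨⊤, le_rfl⟩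
        (fun x hx y hxy => le_trans hx hxy)
        (fun x hx y hy => le_inf hx hy)
        ((wTerm n).eval v)
        (fun h => hne' (top_le_iff.mp h))
      -- inner disjunctions
      set B : ℕ → α := fun i =>
        (bigSup (((List.range (n + 1)).filter (fun j => j ≠ i)).map HTerm.var)).eval v with hB
      have hhimp : ∀ i : Fin (n + 1), v i ⇨ B i ∉ F := by
        intro i hmem
        apply hwF
        apply hF.2.2.1 _ hmem
        have hm : HTerm.himp (HTerm.var i.val)
            (bigSup (((List.range (n + 1)).filter (fun j => j ≠ i.val)).map HTerm.var)) ∈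
            (List.range (n + 1)).map (fun i => HTerm.himp (HTerm.var i)
              (bigSup (((List.range (n + 1)).filter (fun j => j ≠ i)).map HTerm.var))) :=
          List.mem_map.mpr ⟨i.val, List.mem_range.mpr i.isLt, rfl⟩
        exact le_bigSup_eval v hm
      -- for each i, a prime filter G i ⊇ F with v i ∈ G i and B i ∉ G i
      have hGex : ∀ i : Fin (n + 1), ∃ G : Set α, IsPrimeFilter G ∧
          ({x | ∃ g ∈ F, g ⊓ v i ≤ x} ⊆ G) ∧ B i ∉ G := by
        intro i
        apply exists_primeFilter
        · exact ⟨v i, ⊤, top_mem_of_primeFilter hF, by simp⟩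
        · rintro x ⟨g, hg, hgx⟩ y hxy
          exact ⟨g, hg, le_trans hgx hxy⟩
        · rintro x ⟨g, hg, hgx⟩ y ⟨g', hg', hg'y⟩
          exact ⟨g ⊓ g', hF.2.2.2.1 _ hg _ hg',
            le_inf (le_trans (inf_le_inf_right _ inf_le_left) hgx)
              (le_trans (inf_le_inf_right _ inf_le_right) hg'y)⟩
        · rintro ⟨g, hg, hgB⟩
          exact hhimp i (hF.2.2.1 _ hg _ (le_himp_iff.mpr hgB))
      choose G hGprime hGsub hGB using hGex
      apply hwidth F hF G
      · intro i
        refine ⟨hGprime i, fun x hx => hGsub i ⟨x, hx, inf_le_left⟩⟩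
      · intro i j hij hsub
        apply hGB j
        have hvi : v i ∈ G i := hGsub i ⟨⊤, top_mem_of_primeFilter hF, by simp⟩
        have hvij : v i ∈ G j := hsub hvi
        have hle : v i ≤ B j := by
          have : (HTerm.var i.val).eval v ≤ _ :=
            le_bigSup_eval v (l := ((List.range (n + 1)).filter (fun k => k ≠ j.val)).map HTerm.var)
              (List.mem_map.mpr ⟨i.val, List.mem_filter.mpr
                ⟨List.mem_range.mpr i.isLt,
                 by simpa using fun h => hij (Fin.val_injective h)⟩, rfl⟩)
          exact this
        exact (hGprime j).2.2.1 _ hvij _ hle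
    · -- equation ⟹ width
      intro hmod F hF G hG hanti
      have key : ∀ i j : Fin (n + 1), ∃ x, (i ≠ j → x ∈ G i ∧ x ∉ G j) := by
        intro i j
        by_cases h : i = j
        · exact ⟨⊤, fun h' => absurd h h'⟩
        · obtain ⟨x, hx⟩ := Set.not_subset.mp (hanti i j h)
          exact ⟨x, fun _ => hx⟩
      choose a ha using key
      classical
      set c : Fin (n + 1) → α := fun i => (Finset.univ.erase i).inf (a i) with hc
      have hcmem : ∀ i, c i ∈ G i := by
        intro i
        exact finset_inf_mem (hG i).1 _ _
          (fun j hj => (ha i j (Ne.symm (Finset.ne_of_mem_erase hj))).1)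
      have hcnot : ∀ i j : Fin (n + 1), i ≠ j → c i ∉ G j := by
        intro i j hij hmem
        have hle : c i ≤ a i j := Finset.inf_le (Finset.mem_erase.mpr ⟨Ne.symm hij, Finset.mem_univ _⟩)
        exact (ha i j hij).2 ((hG j).1.2.2.1 _ hmem _ hle)
      set v : ℕ → α := fun k => if h : k < n + 1 then c ⟨k, h⟩ else ⊥ with hv
      have hw : (wTerm n).eval v ∈ F := by
        rw [hmod v]
        exact top_mem_of_primeFilter hF
      obtain ⟨t, htmem, htF⟩ := bigSup_eval_mem hF v hw
      simp only [wTerm, List.mem_map, List.mem_range] at htmem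
      obtain ⟨i, hi, rfl⟩ := htmem
      set I : Fin (n + 1) := ⟨i, hi⟩
      have htG : (HTerm.var i).eval v ⇨ _ ∈ G I := (hG I).2 htF
      have hvi : v i = c I := by simp [hv, hi, show i ≤ n by omega]; rfl
      have hBmem : (bigSup (((List.range (n + 1)).filter (fun j => j ≠ i)).map HTerm.var)).eval v
          ∈ G I := by
        have h1 : v i ⊓ (v i ⇨ _) ∈ G I :=
          (hG I).1.2.2.2.1 _ (hvi ▸ hcmem I) _ htG
        exact (hG I).1.2.2.1 _ h1 _ (by rw [inf_himp]; exact inf_le_right)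
      obtain ⟨s, hsmem, hsF⟩ := bigSup_eval_mem (hG I).1 v hBmem
      simp only [List.mem_map, List.mem_filter, List.mem_range] at hsmem
      obtain ⟨j, ⟨hj, hji⟩, rfl⟩ := hsmem
      have hji' : j ≠ i := by simpa using hji
      have hvj : (HTerm.var j).eval v = c ⟨j, hj⟩ := by simp [HTerm.eval, hv, hj, show j ≤ n by omega]
      rw [hvj] at hsF
      exact hcnot ⟨j, hj⟩ I (fun h => hji' (congrArg Fin.val h)) hsF
  refine ⟨main, ⟨{(wTerm n, HTerm.top)}, fun A => ?_⟩⟩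
  show WidthAtMost n A ↔ _
  rw [main A]
  simp
end

section
/- For every natural number n ≥ 1, a Heyting algebra A has depth at most n (no chain of n+1 elements in its dual Esakia space) if and only if A satisfies the equation d_n ≈ 1, where d_1 = x_1 ∨ (x_1 → 0) and d_{k+1} = x_{k+1} ∨ (x_{k+1} → d_k). Consequently, the class D_n of Heyting algebras of depth at most n is a variety. -/
/-- Depth at most n: no chain of n+1 elements in the dual Esakia space (prime filters
ordered by inclusion). -/
def DepthAtMost (n : ℕ) (A : HAlg) : Prop :=
  ∀ G : Fin (n + 1) → Set A.carrier,
    (∀ i, IsPrimeFilter (G i)) → (∀ i j, i < j → G i ⊂ G j) → False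

/-- The terms d_n: dTerm 1 = x₁ ∨ (x₁ → ⊥), dTerm (k+1) = x_{k+1} ∨ (x_{k+1} → dTerm k). -/
def dTerm : ℕ → HTerm
  | 0 => HTerm.bot
  | k + 1 => HTerm.sup (HTerm.var (k + 1)) (HTerm.himp (HTerm.var (k + 1)) (dTerm k))

/-!
In the dual space, `a ∨ (a → b)` fails at a point `P` exactly when some strictly larger point
contains `a` and omits `b`. Unwinding `d_k` therefore shows that `d_k` fails at `P` under some
valuation iff a chain of `k + 1` points starts at `P`; by the prime filter theorem every element
other than `⊤` is omitted by some point, so `d_n ≈ 1` holds iff there is no chain of `n + 1` points.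
-/

theorem Order.Ideal.IsPrime.isPrimeFilter_compl {α : Type} [HeytingAlgebra α] {J : Ideal α}
    (hJ : J.IsPrime) : IsPrimeFilter (J : Set α)ᶜ := by
  obtain ⟨b, hb⟩ := J.nonempty
  exact ⟨⟨⊤, hJ.top_notMem⟩, fun h => Set.eq_univ_iff_forall.1 h b hb,
    fun x hx y hxy hy => hx (J.lower hxy hy),
    fun x hx y hy hxy => (hJ.mem_or_mem hxy).elim hx hy,
    fun x y hxy => not_and_or.1 fun h => hxy (J.sup_mem h.1 h.2)⟩

theorem Order.IsPFilter.exists_isPrimeFilter_of_notMem {α : Type} [HeytingAlgebra α]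
    {F : Set α} (hF : IsPFilter F) {b : α} (hb : b ∉ F) :
    ∃ P, IsPrimeFilter P ∧ F ⊆ P ∧ b ∉ P := by
  have hdisj : Disjoint (hF.toPFilter : Set α) (Ideal.principal b : Set α) :=
    Set.disjoint_left.2 fun _ hx hxb => hb (hF.toPFilter.mem_of_le hxb hx)
  obtain ⟨J, hJ, hbJ, hFJ⟩ := DistribLattice.prime_ideal_of_disjoint_filter_ideal hdisj
  exact ⟨(J : Set α)ᶜ, hJ.isPrimeFilter_compl, Set.disjoint_left.1 hFJ,
    fun h => h (hbJ Ideal.mem_principal_self)⟩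

namespace IsPrimeFilter

variable {α : Type} [HeytingAlgebra α] {P Q : Set α} {a b : α}

theorem mem_of_le (hP : IsPrimeFilter P) (ha : a ∈ P) (hab : a ≤ b) : b ∈ P :=
  hP.2.2.1 a ha b hab

theorem inf_mem (hP : IsPrimeFilter P) (ha : a ∈ P) (hb : b ∈ P) : a ⊓ b ∈ P :=
  hP.2.2.2.1 a ha b hb

theorem mem_or_mem (hP : IsPrimeFilter P) (h : a ⊔ b ∈ P) : a ∈ P ∨ b ∈ P :=
  hP.2.2.2.2 a b h

theorem top_mem (hP : IsPrimeFilter P) : ⊤ ∈ P :=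
  hP.1.elim fun _ hx => hP.mem_of_le hx le_top

theorem bot_notMem (hP : IsPrimeFilter P) : ⊥ ∉ P := fun h =>
  hP.2.1 (Set.eq_univ_of_forall fun _ => hP.mem_of_le h bot_le)

theorem mem_of_himp_mem (hP : IsPrimeFilter P) (ha : a ∈ P) (h : a ⇨ b ∈ P) : b ∈ P :=
  hP.mem_of_le (hP.inf_mem ha h) inf_himp_le

theorem isPFilter_himp (hP : IsPrimeFilter P) (a : α) : Order.IsPFilter {x | a ⇨ x ∈ P} :=
  .of_def ⟨⊤, by simpa using hP.top_mem⟩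
    (fun x hx y hy => ⟨x ⊓ y, by simpa [himp_inf_distrib] using hP.inf_mem hx hy,
      inf_le_left, inf_le_right⟩)
    (fun hxy hx => hP.mem_of_le hx (himp_le_himp_left hxy))

/-- The witness is any prime filter extending `{x | a ⇨ x ∈ P}` and omitting `b`. -/
theorem exists_ssubset_of_sup_himp_notMem (hP : IsPrimeFilter P) (h : a ⊔ (a ⇨ b) ∉ P) :
    ∃ Q, IsPrimeFilter Q ∧ P ⊂ Q ∧ b ∉ Q := by
  obtain ⟨Q, hQ, hPQ, hbQ⟩ := (hP.isPFilter_himp a).exists_isPrimeFilter_of_notMem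
    (b := b) fun hb => h (hP.mem_of_le (show a ⇨ b ∈ P from hb) le_sup_right)
  have haQ : a ∈ Q := hPQ (by simpa using hP.top_mem)
  refine ⟨Q, hQ, ⟨fun x hx => hPQ (hP.mem_of_le hx le_himp), fun hQP => ?_⟩, hbQ⟩
  exact h (hP.mem_of_le (hQP haQ) le_sup_left)

theorem sup_himp_notMem (hP : IsPrimeFilter P) (hQ : IsPrimeFilter Q) (hPQ : P ⊆ Q)
    (haP : a ∉ P) (haQ : a ∈ Q) (hbQ : b ∉ Q) : a ⊔ (a ⇨ b) ∉ P := fun h =>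
  (hP.mem_or_mem h).elim haP fun hab => hbQ (hQ.mem_of_himp_mem haQ (hPQ hab))

end IsPrimeFilter

section dTerm

variable {α : Type} [HeytingAlgebra α]

theorem eval_dTerm_update {k i : ℕ} (hki : k < i) (v : ℕ → α) (a : α) :
    (dTerm k).eval (Function.update v i a) = (dTerm k).eval v := by
  induction k with
  | zero => rfl
  | succ k ih =>
    simp only [dTerm, HTerm.eval, Function.update_of_ne hki.ne, ih (by omega)]

theorem exists_chain_of_eval_dTerm_notMem (v : ℕ → α) (k : ℕ) {P : Set α}
    (hP : IsPrimeFilter P) (hv : (dTerm k).eval v ∉ P) :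
    ∃ C : Fin (k + 1) → Set α, (∀ i, IsPrimeFilter (C i)) ∧ StrictMono C ∧ C 0 = P := by
  induction k generalizing P with
  | zero => exact ⟨fun _ => P, fun _ => hP, Fin.strictMono_iff_lt_succ.2 fun i => i.elim0, rfl⟩
  | succ k ih =>
    obtain ⟨Q, hQ, hPQ, hvQ⟩ := hP.exists_ssubset_of_sup_himp_notMem hv
    obtain ⟨C, hC, hCmono, rfl⟩ := ih hQ hvQ
    exact ⟨Matrix.vecCons P C, Fin.cons hP hC, hCmono.vecCons hPQ, rfl⟩

theorem exists_eval_dTerm_notMem_of_chain (k : ℕ) (C : Fin (k + 1) → Set α)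
    (hC : ∀ i, IsPrimeFilter (C i)) (hmono : StrictMono C) :
    ∃ v : ℕ → α, (dTerm k).eval v ∉ C 0 := by
  induction k with
  | zero => exact ⟨fun _ => ⊥, (hC 0).bot_notMem⟩
  | succ k ih =>
    obtain ⟨v, hv⟩ := ih (fun i => C i.succ) (fun _ => hC _) (hmono.comp Fin.strictMono_succ)
    have hC01 : C 0 ⊂ C 1 := hmono (Fin.succ_pos 0)
    obtain ⟨a, ha1, ha0⟩ := Set.exists_of_ssubset hC01
    refine ⟨Function.update v (k + 1) a, ?_⟩
    simp only [dTerm, HTerm.eval, Function.update_self, eval_dTerm_update (Nat.lt_succ_self k)]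
    exact (hC 0).sup_himp_notMem (hC 1) hC01.subset ha0 ha1 hv

end dTerm

theorem depthAtMost_iff_models_dTerm (n : ℕ) (A : HAlg) :
    DepthAtMost n A ↔ Models A.carrier (dTerm n) HTerm.top := by
  refine ⟨fun hA v => ?_, fun hA C hC hmono => ?_⟩
  · by_contra hne
    obtain ⟨P, hP, -, hvP⟩ :=
      (Order.PFilter.principal (⊤ : A.carrier)).isPFilter.exists_isPrimeFilter_of_notMem
        (b := (dTerm n).eval v) fun h => hne (top_le_iff.1 h)
    obtain ⟨C, hC, hmono, -⟩ := exists_chain_of_eval_dTerm_notMem v n hP hvP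
    exact hA C hC fun _ _ hij => hmono hij
  · obtain ⟨v, hv⟩ := exists_eval_dTerm_notMem_of_chain n C hC fun i j hij => hmono i j hij
    exact hv ((hA v).symm ▸ (hC 0).top_mem)

theorem depth_iff_dTerm_general (n : ℕ) :
    (∀ A : HAlg, DepthAtMost n A ↔ Models A.carrier (dTerm n) HTerm.top) ∧
    IsVariety (fun A => DepthAtMost n A) :=
  ⟨depthAtMost_iff_models_dTerm n, {(dTerm n, HTerm.top)}, fun A => by
    simp [depthAtMost_iff_models_dTerm]⟩

theorem depth_iff_dTerm (n : ℕ) (hn : 1 ≤ n) :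
    (∀ A : HAlg, DepthAtMost n A ↔ Models A.carrier (dTerm n) HTerm.top) ∧
    IsVariety (fun A => DepthAtMost n A) :=
  depth_iff_dTerm_general n
end

section
/- Let n ≥ 1 and let f : Y → X be an Esakia morphism between Esakia spaces of width at most n such that (i) Y has a minimum element ⊥, and (ii) for every z ∈ X distinct from the maximum of X (if it exists), if f(⊥) < z then z belongs to an antichain of n elements contained in ↑f(⊥). Then, writing ↑f(⊥)^⊤ for ↑f(⊥) with the maximum of X (if any) removed, there is a subposet Z of Y such that the restriction of f to Z is a poset isomorphism onto ↑f(⊥)^⊤. -/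
/-- The space has width at most n: no upset ↑x contains an antichain of n+1 elements. -/
def EsaSpace.WidthAtMost (X : EsaSpace) (n : ℕ) : Prop :=
  ∀ (x : X.carrier) (g : Fin (n + 1) → X.carrier),
    (∀ i, x ≤ g i) → (∀ i j, i ≠ j → ¬ g i ≤ g j) → False

/-! Condition (ii) and width at most `n` force every fibre of `f` over a non-maximal
`z > f ⊥` to be a chain: two incomparable points of such a fibre, together with lifts above `⊥`
of the other members of an `n`-element antichain through `z`, would form an antichain of size
`n + 1` in `↑⊥`. Fibres are closed, so by compactness each of these chains has a greatest element.
The set `Z` consists of `⊥` and these fibre maxima, and the back condition of `f` makes `f`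
reflect the order on `Z`. -/

theorem Fin.pairwise_snoc {α : Type*} {r : α → α → Prop} {m : ℕ} {g : Fin m → α} {a : α}
    (hg : Pairwise fun i j => r (g i) (g j)) (hga : ∀ i, r (g i) a ∧ r a (g i)) :
    Pairwise fun i j =>
      r (Fin.snoc (α := fun _ => α) g a i) (Fin.snoc (α := fun _ => α) g a j) := by
  intro i j hij
  induction i using Fin.lastCases with
  | last =>
    induction j using Fin.lastCases with
    | last => exact absurd rfl hij
    | cast j => simpa using (hga j).2
  | cast i =>
    induction j using Fin.lastCases with
    | last => simpa using (hga i).1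
    | cast j => simpa using hg fun h => hij (by rw [h])

theorem IsChain.exists_isGreatest_of_isClosed {α : Type*} [TopologicalSpace α] [CompactSpace α]
    [Preorder α] [ClosedIciTopology α] {s : Set α} (hc : IsChain (· ≤ ·) s) (hs : IsClosed s)
    (hne : s.Nonempty) : ∃ m, IsGreatest s m := by
  have : Nonempty s := hne.to_subtype
  have hdir : Directed (· ⊇ ·) fun c : s => Set.Ici (c : α) ∩ s := by
    intro c d
    rcases hc.total c.2 d.2 with hcd | hdc
    · exact ⟨d, fun y hy => ⟨hcd.trans hy.1, hy.2⟩, le_rfl⟩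
    · exact ⟨c, le_rfl, fun y hy => ⟨hdc.trans hy.1, hy.2⟩⟩
  obtain ⟨m, hm⟩ := IsCompact.nonempty_iInter_of_directed_nonempty_isCompact_isClosed _ hdir
    (fun c => ⟨c, le_rfl, c.2⟩) (fun _ => (isClosed_Ici.inter hs).isCompact)
    (fun _ => isClosed_Ici.inter hs)
  simp only [Set.mem_iInter] at hm
  exact ⟨m, (hm this.some).2, fun y hy => (hm ⟨y, hy⟩).1⟩

namespace EsaHom

variable {X Y : EsaSpace} (f : EsaHom Y X)

theorem isChain_Ici_inter_fiber {n : ℕ} (hY : Y.WidthAtMost n) (x : Y.carrier)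
    {g : Fin n → X.carrier} (hxg : ∀ i, f.toFun x ≤ g i) (hg : Pairwise fun i j => ¬ g i ≤ g j)
    (i₀ : Fin n) : IsChain (· ≤ ·) (Set.Ici x ∩ f.toFun ⁻¹' {g i₀}) := by
  rintro y₁ ⟨hxy₁, hy₁⟩ y₂ ⟨hxy₂, hy₂ : f.toFun y₂ = g i₀⟩ -
  by_contra! hinc
  choose w hxw hfw using fun i => f.up x (g i) (hxg i)
  set w' := Function.update w i₀ y₁
  have hfw' : ∀ i, f.toFun (w' i) = g i := by
    intro i
    rcases eq_or_ne i i₀ with rfl | hi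
    · simpa [w'] using hy₁
    · simpa [w', hi] using hfw i
  have hxw' : ∀ i, x ≤ w' i := by
    intro i
    rcases eq_or_ne i i₀ with rfl | hi
    · simpa [w'] using hxy₁
    · simpa [w', hi] using hxw i
  have hw'_anti : Pairwise fun i j => ¬ w' i ≤ w' j :=
    fun i j hij h => hg hij (by simpa [hfw'] using f.monotone h)
  have hw'_inc : ∀ i, ¬ w' i ≤ y₂ ∧ ¬ y₂ ≤ w' i := by
    intro i
    rcases eq_or_ne i i₀ with rfl | hi
    · simpa [w'] using hinc
    · exact ⟨fun h => hg hi (by simpa [hfw', hy₂] using f.monotone h),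
        fun h => hg hi.symm (by simpa [hfw', hy₂] using f.monotone h)⟩
  exact hY x (Fin.snoc w' y₂) (fun i => Fin.lastCases (by simpa using hxy₂)
    (fun i => by simpa using hxw' i) i)
    fun i j hij => Fin.pairwise_snoc (r := fun a b => ¬ a ≤ b) hw'_anti hw'_inc hij

theorem le_iff_of_isGreatest_fiber {y m : Y.carrier}
    (hm : IsGreatest (f.toFun ⁻¹' {f.toFun m}) m) : y ≤ m ↔ f.toFun y ≤ f.toFun m := by
  refine ⟨fun h => f.monotone h, fun h => ?_⟩
  obtain ⟨w, hyw, hw⟩ := f.up y _ h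
  exact hyw.trans (hm.2 hw)

def crossSection (bot : Y.carrier) : Set Y.carrier :=
  {y | ¬ IsTop (f.toFun y) ∧
    (y = bot ∨ f.toFun bot < f.toFun y ∧ IsGreatest (f.toFun ⁻¹' {f.toFun y}) y)}

variable {f} {bot : Y.carrier}

theorem le_iff_of_mem_crossSection (hbot : ∀ y, bot ≤ y) {z₁ z₂ : Y.carrier}
    (h₁ : z₁ ∈ f.crossSection bot) (h₂ : z₂ ∈ f.crossSection bot) :
    z₁ ≤ z₂ ↔ f.toFun z₁ ≤ f.toFun z₂ := by
  rcases h₁ with ⟨-, rfl | ⟨hlt₁, -⟩⟩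
  · exact iff_of_true (hbot _) (f.monotone (hbot _))
  rcases h₂ with ⟨-, rfl | ⟨-, hm⟩⟩
  · exact iff_of_false (fun h => hlt₁.not_ge (f.monotone h)) hlt₁.not_ge
  · exact f.le_iff_of_isGreatest_fiber hm

theorem bijOn_crossSection (hbot : ∀ y, bot ≤ y)
    (hmax : ∀ w, f.toFun bot < w → ¬ IsTop w → ∃ m, IsGreatest (f.toFun ⁻¹' {w}) m) :
    Set.BijOn f.toFun (f.crossSection bot) {w | f.toFun bot ≤ w ∧ ¬ IsTop w} := by
  refine ⟨fun y hy => ⟨f.monotone (hbot y), hy.1⟩, fun z₁ h₁ z₂ h₂ he => ?_, ?_⟩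
  · exact le_antisymm ((le_iff_of_mem_crossSection hbot h₁ h₂).2 he.le)
      ((le_iff_of_mem_crossSection hbot h₂ h₁).2 he.ge)
  rintro w ⟨hbw, hw⟩
  rcases hbw.eq_or_lt with rfl | hlt
  · exact ⟨bot, ⟨hw, Or.inl rfl⟩, rfl⟩
  obtain ⟨m, hm⟩ := hmax w hlt hw
  obtain rfl : f.toFun m = w := hm.1
  exact ⟨m, ⟨hw, Or.inr ⟨hlt, hm⟩⟩, rfl⟩

end EsaHom

theorem trick_width_general (n : ℕ) (X Y : EsaSpace)
    (hY : Y.WidthAtMost n)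
    (f : EsaHom Y X)
    (bot : Y.carrier) (hbot : ∀ y, bot ≤ y)
    (hii : ∀ z : X.carrier, ¬ IsTop z → f.toFun bot < z →
      ∃ g : Fin n → X.carrier, (∀ i, f.toFun bot ≤ g i) ∧
        (∀ i j, i ≠ j → ¬ g i ≤ g j) ∧ ∃ i, g i = z) :
    ∃ Z : Set Y.carrier,
      Set.BijOn f.toFun Z {w | f.toFun bot ≤ w ∧ ¬ IsTop w} ∧
      ∀ z₁ ∈ Z, ∀ z₂ ∈ Z, (z₁ ≤ z₂ ↔ f.toFun z₁ ≤ f.toFun z₂) := by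
  have := Y.compact
  have := X.t2
  have : ClosedIciTopology Y.carrier := ⟨Y.ici_closed⟩
  have hmax : ∀ w, f.toFun bot < w → ¬ IsTop w → ∃ m, IsGreatest (f.toFun ⁻¹' {w}) m := by
    intro w hlt hw
    obtain ⟨g, hbg, hg, i₀, rfl⟩ := hii w hw hlt
    have hchain : IsChain (· ≤ ·) (f.toFun ⁻¹' {g i₀}) :=
      (f.isChain_Ici_inter_fiber hY bot hbg (fun i j => hg i j) i₀).mono
        fun y hy => show y ∈ Set.Ici bot ∩ _ from ⟨hbot y, hy⟩
    obtain ⟨y, -, hy⟩ := f.up bot (g i₀) (hbg i₀)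
    exact IsChain.exists_isGreatest_of_isClosed hchain
      (isClosed_singleton.preimage f.continuous) ⟨y, hy⟩
  exact ⟨f.crossSection bot, EsaHom.bijOn_crossSection hbot hmax,
    fun _ h₁ _ h₂ => EsaHom.le_iff_of_mem_crossSection hbot h₁ h₂⟩

theorem trick_width (n : ℕ) (hn : 1 ≤ n) (X Y : EsaSpace)
    (hX : X.WidthAtMost n) (hY : Y.WidthAtMost n)
    (f : EsaHom Y X)
    (bot : Y.carrier) (hbot : ∀ y, bot ≤ y)
    (hii : ∀ z : X.carrier, ¬ IsTop z → f.toFun bot < z →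
      ∃ g : Fin n → X.carrier, (∀ i, f.toFun bot ≤ g i) ∧
        (∀ i j, i ≠ j → ¬ g i ≤ g j) ∧ ∃ i, g i = z) :
    ∃ Z : Set Y.carrier,
      Set.BijOn f.toFun Z {w | f.toFun bot ≤ w ∧ ¬ IsTop w} ∧
      ∀ z₁ ∈ Z, ∀ z₂ ∈ Z, (z₁ ≤ z₂ ↔ f.toFun z₁ ≤ f.toFun z₂) :=
  trick_width_general n X Y hY f bot hbot hii
end
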